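/- arXiv:1211.4855 — 2 statements merged into one kernel-verified Lean document; each statement's English description precedes it below -/
import Mathlib

section
/- Let A and B be unital C*-algebras and let Φ : A → B be a surjective unital *-homomorphism (so that B is *-isomorphic to the quotient of A by the closed two-sided ideal ker Φ). Then d̂(B) ≤ d̂(A). -/
noncomputable section

open scoped ENNReal

/-- The (unique) C*-norm on matrices over a unital C*-algebra, described algebraically via
the spectral radius: `‖x‖ = √(r(xᴴ x))`. -/
def cstarMatNorm {A : Type*} [NormedRing A] [StarRing A] [NormedAlgebra ℂ A]
    {n : ℕ} (x : Matrix (Fin n) (Fin n) A) : ℝ :=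
  Real.sqrt (spectralRadius ℂ (x.conjTranspose * x)).toReal

/-- An algebra homomorphism between normed algebras is bounded. -/
def IsBddHom {A B : Type*} [NormedRing A] [NormedRing B] [NormedAlgebra ℂ A]
    [NormedAlgebra ℂ B] (ρ : A →ₐ[ℂ] B) : Prop :=
  ∃ c : ℝ, ∀ a : A, ‖ρ a‖ ≤ c * ‖a‖

/-- The operator norm `‖ρ‖` of a bounded algebra homomorphism. -/
def homNorm {A B : Type*} [NormedRing A] [NormedRing B] [NormedAlgebra ℂ A]
    [NormedAlgebra ℂ B] (ρ : A →ₐ[ℂ] B) : ℝ :=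
  sInf {c : ℝ | 0 ≤ c ∧ ∀ a : A, ‖ρ a‖ ≤ c * ‖a‖}

/-- `CBBddBy ρ c` means `‖ρ‖_cb ≤ c`, i.e. `‖ρ_n x‖ ≤ c * ‖x‖` for every `n` and every
`n × n` matrix `x` over the domain, where `ρ_n` is the entrywise application of `ρ`. -/
def CBBddBy {A B : Type*} [NormedRing A] [StarRing A] [NormedAlgebra ℂ A] [NormedRing B]
    [StarRing B] [NormedAlgebra ℂ B] (ρ : A →ₐ[ℂ] B) (c : ℝ) : Prop :=
  ∀ (n : ℕ) (x : Matrix (Fin n) (Fin n) A),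
    cstarMatNorm (ρ.mapMatrix x) ≤ c * cstarMatNorm x

/-- `PisierCondition A f` says: every bounded unital homomorphism `ρ` from `A` into the bounded
operators on some complex Hilbert space satisfies `‖ρ‖_cb ≤ f ‖ρ‖`. -/
def PisierCondition (A : Type*) [NormedRing A] [StarRing A] [NormedAlgebra ℂ A]
    (f : ℝ → ℝ) : Prop :=
  ∀ (H : Type) [NormedAddCommGroup H] [InnerProductSpace ℂ H] [CompleteSpace H]
    (ρ : A →ₐ[ℂ] (H →L[ℂ] H)), IsBddHom ρ → CBBddBy ρ (f (homNorm ρ))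

/-- The set of positive integers `d` such that there is `κ > 0` with
`‖ρ‖_cb ≤ κ ‖ρ‖ ^ d` for all bounded unital homomorphisms `ρ` of `A` into some `B(H)`. -/
def pisierSet (A : Type*) [NormedRing A] [StarRing A] [NormedAlgebra ℂ A] : Set ℕ :=
  {d : ℕ | 0 < d ∧ ∃ κ : ℝ, 0 < κ ∧ PisierCondition A fun r => κ * r ^ d}

/-- Pisier's similarity degree `d(A)` (equal to `∞` if no similarity bound exists). -/
def pisierDegree (A : Type*) [NormedRing A] [StarRing A] [NormedAlgebra ℂ A] : ℝ≥0∞ :=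
  ⨅ d ∈ pisierSet A, (d : ℝ≥0∞)

/-- The set of positive reals `γ ≥ d(A)` such that `‖ρ‖_cb ≤ γ ‖ρ‖ ^ γ` for every bounded
unital homomorphism `ρ` of `A` into some `B(H)`. -/
def hatdSet (A : Type*) [NormedRing A] [StarRing A] [NormedAlgebra ℂ A] : Set ℝ :=
  {γ : ℝ | 0 < γ ∧ pisierDegree A ≤ ENNReal.ofReal γ ∧
    PisierCondition A fun r => γ * r ^ γ}

/-- The modified similarity degree `d̂(A)`: the smallest positive `γ ≥ d(A)` such that
`‖ρ‖_cb ≤ γ ‖ρ‖ ^ γ` for all bounded unital homomorphisms of `A` into some `B(H)`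
(`∞` if there is none). -/
def hatd (A : Type*) [NormedRing A] [StarRing A] [NormedAlgebra ℂ A] : ℝ≥0∞ :=
  ⨅ γ ∈ hatdSet A, ENNReal.ofReal γ

/-- The strong operator topology on `B(H)`: the topology induced by the inclusion into
the space of all functions `H → H` with the topology of pointwise convergence. -/
def sot (H : Type*) [NormedAddCommGroup H] [InnerProductSpace ℂ H] :
    TopologicalSpace (H →L[ℂ] H) :=
  TopologicalSpace.induced (fun T : H →L[ℂ] H => (T : H → H)) Pi.topologicalSpace

/-- The weak operator topology on `B(H)`: the topology induced by the maps
`T ↦ ⟪T x, y⟫`. -/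
def wot (H : Type*) [NormedAddCommGroup H] [InnerProductSpace ℂ H] :
    TopologicalSpace (H →L[ℂ] H) :=
  TopologicalSpace.induced
    (fun T : H →L[ℂ] H => fun p : H × H => (inner ℂ (T p.1) p.2 : ℂ)) Pi.topologicalSpace

/-- `σ`, a homomorphism from a von Neumann algebra `M ⊆ B(H)` to `B(H')`, is continuous from
the strong operator topology to the strong operator topology on the closed unit ball of the
self-adjoint part `M^sa`. -/
def SOTContOnBall {H : Type*} [NormedAddCommGroup H] [InnerProductSpace ℂ H] [CompleteSpace H]
    (M : VonNeumannAlgebra H) {H' : Type*} [NormedAddCommGroup H'] [InnerProductSpace ℂ H']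
    [CompleteSpace H'] (σ : M.toStarSubalgebra →ₐ[ℂ] (H' →L[ℂ] H')) : Prop :=
  @ContinuousOn _ _ ((sot H).induced fun a : M.toStarSubalgebra => (a : H →L[ℂ] H)) (sot H')
    σ {a : M.toStarSubalgebra | IsSelfAdjoint ((a : H →L[ℂ] H)) ∧ ‖(a : H →L[ℂ] H)‖ ≤ 1}

/-- The set of positive reals `γ` such that `‖σ‖_cb ≤ γ ‖σ‖ ^ γ` for every bounded unital
homomorphism `σ` of the von Neumann algebra `M` into some `B(H')` that is SOT-SOT continuous
on the closed unit ball of `M^sa`. -/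
def hatdStarSet {H : Type*} [NormedAddCommGroup H] [InnerProductSpace ℂ H] [CompleteSpace H]
    (M : VonNeumannAlgebra H) : Set ℝ :=
  {γ : ℝ | 0 < γ ∧
    ∀ (H' : Type) [NormedAddCommGroup H'] [InnerProductSpace ℂ H'] [CompleteSpace H']
      (σ : M.toStarSubalgebra →ₐ[ℂ] (H' →L[ℂ] H')), IsBddHom σ → SOTContOnBall M σ →
        CBBddBy σ (γ * homNorm σ ^ γ)}

/-- The modified similarity degree `d̂_*(M)` of a von Neumann algebra `M ⊆ B(H)`. -/
def hatdStar {H : Type*} [NormedAddCommGroup H] [InnerProductSpace ℂ H] [CompleteSpace H]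
    (M : VonNeumannAlgebra H) : ℝ≥0∞ :=
  ⨅ γ ∈ hatdStarSet M, ENNReal.ofReal γ

/-- A tracial state on a unital complex *-algebra. -/
structure IsTracialState {A : Type*} [NormedRing A] [StarRing A] [NormedAlgebra ℂ A]
    (τ : A →ₗ[ℂ] ℂ) : Prop where
  pos : ∀ a : A, 0 ≤ (τ (star a * a)).re ∧ (τ (star a * a)).im = 0
  unit : τ 1 = 1
  tracial : ∀ a b : A, τ (a * b) = τ (b * a)

/-- `(π, ξ)` is a GNS representation for the state `τ`: `π` is a unital *-representation on a
Hilbert space `K`, `ξ` is a unit cyclic vector, and `τ a = ⟪π(a) ξ, ξ⟫` for all `a`. -/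
def IsGNSRep {A : Type*} [NormedRing A] [StarRing A] [NormedAlgebra ℂ A]
    {K : Type*} [NormedAddCommGroup K] [InnerProductSpace ℂ K] [CompleteSpace K]
    (τ : A →ₗ[ℂ] ℂ) (π : A →⋆ₐ[ℂ] (K →L[ℂ] K)) (ξ : K) : Prop :=
  ‖ξ‖ = 1 ∧ Dense ((Submodule.span ℂ (Set.range fun a : A => π a ξ) : Submodule ℂ K) : Set K) ∧
    ∀ a : A, τ a = (inner ℂ ξ (π a ξ) : ℂ)

/-- A subset of `B(K)` is a factor if the only elements commuting with all of it that also
belong to it are the scalar multiples of the identity. -/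
def IsFactorSet {K : Type*} [NormedAddCommGroup K] [InnerProductSpace ℂ K]
    (M : Set (K →L[ℂ] K)) : Prop :=
  ∀ x ∈ M ∩ Set.centralizer M, ∃ c : ℂ, x = c • (1 : K →L[ℂ] K)

/-! A surjective *-homomorphism `φ` of unital C*-algebras is an almost isometric quotient
map: `b = φ a₀` lifts to `a₀ g(a₀⋆a₀)`, where the continuous cutoff `g` equals `1` on the
spectrum of `b⋆b ⊆ [0, ‖b‖²]` and keeps `s g(s)²` below `t²`, for any `t > ‖b‖`. Applied to the
induced map `Mₙ(A) → Mₙ(B)`, this shows that a bound `‖ρ ∘ Φ‖_cb ≤ f ‖ρ ∘ Φ‖` for the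
homomorphism `ρ ∘ Φ` of `A` passes to the homomorphism `ρ` of `B`, since `‖ρ ∘ Φ‖ ≤ ‖ρ‖` and `f`
is monotone. Hence every admissible exponent for `A` is one for `B`, both for `d` and for `d̂`. -/

theorem exists_continuous_eqOn_one_mul_sq_le {c : ℝ} (hc : 0 < c) :
    ∃ g : ℝ → ℝ, Continuous g ∧ (∀ s ≤ c, g s = 1) ∧ ∀ s, 0 ≤ s → s * g s ^ 2 ≤ c := by
  have hmax_pos (s : ℝ) : 0 < max s c := hc.trans_le (le_max_right _ _)
  refine ⟨fun s => √(c / max s c), ?_, fun s hs => ?_, fun s hs => ?_⟩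
  · exact (continuous_const.div (by fun_prop) fun s => (hmax_pos s).ne').sqrt
  · simp [max_eq_right hs, div_self hc.ne']
  · rw [Real.sq_sqrt (by positivity), mul_div_assoc', div_le_iff₀ (hmax_pos s)]
    exact mul_le_mul_of_nonneg_right (le_max_left s c) hc.le |>.trans_eq (mul_comm _ _)

namespace CStarMatrix

variable {n : Type*} [Fintype n] [DecidableEq n] {A B : Type*}

def mapStarAlgHom [Semiring A] [StarRing A] [Algebra ℂ A] [Semiring B] [StarRing B]
    [Algebra ℂ B] (f : A →⋆ₐ[ℂ] B) : CStarMatrix n n A →⋆ₐ[ℂ] CStarMatrix n n B :=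
  { (f.toAlgHom.mapMatrix : Matrix n n A →ₐ[ℂ] Matrix n n B) with
    map_star' := fun M => by ext i j; exact map_star f (M j i) }

theorem mapStarAlgHom_surjective [Semiring A] [StarRing A] [Algebra ℂ A] [Semiring B]
    [StarRing B] [Algebra ℂ B] {f : A →⋆ₐ[ℂ] B} (hf : Function.Surjective f) :
    Function.Surjective (mapStarAlgHom (n := n) f) := fun N =>
  ⟨fun i j => Function.surjInv hf (N i j), ext fun _ _ => Function.surjInv_eq hf _⟩

theorem norm_ofMatrix_eq_cstarMatNorm [CStarAlgebra A] [PartialOrder A] [StarOrderedRing A]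
    {n : ℕ} (x : Matrix (Fin n) (Fin n) A) : ‖ofMatrix x‖ = cstarMatNorm x := by
  have hsa : IsSelfAdjoint (star (ofMatrix x) * ofMatrix x) := .star_mul_self _
  change _ = √(spectralRadius ℂ (star (ofMatrix x) * ofMatrix x)).toReal
  rw [hsa.spectralRadius_eq_nnnorm, ENNReal.coe_toReal, coe_nnnorm,
    CStarRing.norm_star_mul_self, Real.sqrt_mul_self (norm_nonneg _)]

end CStarMatrix

section Lift

open scoped CStarAlgebra

variable {A B : Type*} [CStarAlgebra A] [CStarAlgebra B]

theorem StarAlgHom.exists_preimage_norm_le (φ : A →⋆ₐ[ℂ] B) (hφ : Function.Surjective φ)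
    {b : B} {t : ℝ} (hbt : ‖b‖ < t) : ∃ a, φ a = b ∧ ‖a‖ ≤ t := by
  obtain ⟨a₀, rfl⟩ := hφ b
  have ht : 0 < t := (norm_nonneg _).trans_lt hbt
  obtain ⟨g, hg, hg_one, hg_le⟩ := exists_continuous_eqOn_one_mul_sq_le (pow_pos ht 2)
  set w := star a₀ * a₀
  refine ⟨a₀ * cfc g w, ?_, ?_⟩
  · have hφw : φ w = star (φ a₀) * φ a₀ := by simp [w, map_star]
    have hspec : ∀ s ∈ spectrum ℝ (φ w), g s = 1 := by
      nontriviality B using spectrum.of_subsingleton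
      intro s hs
      rw [hφw] at hs
      refine hg_one s ?_
      calc s ≤ ‖s‖ := Real.le_norm_self s
        _ ≤ ‖star (φ a₀) * φ a₀‖ := spectrum.norm_le_norm_of_mem hs
        _ ≤ t ^ 2 := by
          rw [CStarRing.norm_star_mul_self, sq]
          exact mul_self_le_mul_self (norm_nonneg _) hbt.le
    rw [map_mul, φ.map_cfc g w (hφa := (IsSelfAdjoint.star_mul_self a₀).map φ),
      cfc_congr hspec, cfc_const_one ℝ (φ w), mul_one]
  · have hsq : star (a₀ * cfc g w) * (a₀ * cfc g w) = cfc (fun s => g s * s * g s) w := by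
      rw [cfc_mul _ g w, cfc_mul g (fun s => s) w, cfc_id' ℝ w, star_mul,
        (cfc_predicate g w).star_eq]
      simp only [w, mul_assoc]
    have hbound : ‖cfc (fun s => g s * s * g s) w‖ ≤ t ^ 2 := by
      refine norm_cfc_le (by positivity) fun s hs => ?_
      have hs0 : 0 ≤ s := spectrum_star_mul_self_nonneg s hs
      rw [show g s * s * g s = s * g s ^ 2 by ring, Real.norm_of_nonneg (by positivity)]
      exact hg_le s hs0
    rw [← hsq, CStarRing.norm_star_mul_self, ← sq] at hbound
    exact (pow_le_pow_iff_left₀ (norm_nonneg _) ht.le two_ne_zero).mp hbound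

theorem StarAlgHom.exists_map_matrix_eq_cstarMatNorm_le (φ : A →⋆ₐ[ℂ] B)
    (hφ : Function.Surjective φ) {n : ℕ} {y : Matrix (Fin n) (Fin n) B} {t : ℝ}
    (hyt : cstarMatNorm y < t) :
    ∃ x : Matrix (Fin n) (Fin n) A, x.map φ = y ∧ cstarMatNorm x ≤ t := by
  -- the C⋆-algebra structure of `CStarMatrix` asks for an order, which plays no role in norms
  let _ : PartialOrder A := CStarAlgebra.spectralOrder A
  let _ : StarOrderedRing A := CStarAlgebra.spectralOrderedRing A
  let _ : PartialOrder B := CStarAlgebra.spectralOrder B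
  let _ : StarOrderedRing B := CStarAlgebra.spectralOrderedRing B
  rw [← CStarMatrix.norm_ofMatrix_eq_cstarMatNorm] at hyt
  obtain ⟨x, hxy, hxt⟩ := (CStarMatrix.mapStarAlgHom φ).exists_preimage_norm_le
    (CStarMatrix.mapStarAlgHom_surjective hφ) hyt
  exact ⟨x, hxy, (CStarMatrix.norm_ofMatrix_eq_cstarMatNorm x).symm.trans_le hxt⟩

end Lift

section HomNorm

variable {A B C : Type*} [NormedRing A] [NormedRing B] [NormedRing C] [NormedAlgebra ℂ A]
  [NormedAlgebra ℂ B] [NormedAlgebra ℂ C]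

theorem homNorm_nonneg (ρ : A →ₐ[ℂ] B) : 0 ≤ homNorm ρ :=
  Real.sInf_nonneg fun _ hc => hc.1

theorem IsBddHom.exists_nonneg {ρ : A →ₐ[ℂ] B} (hρ : IsBddHom ρ) :
    ∃ c, 0 ≤ c ∧ ∀ a, ‖ρ a‖ ≤ c * ‖a‖ := by
  obtain ⟨c, hc⟩ := hρ
  exact ⟨max c 0, le_max_right _ _, fun a =>
    (hc a).trans (mul_le_mul_of_nonneg_right (le_max_left _ _) (norm_nonneg _))⟩

theorem IsBddHom.comp {ρ : B →ₐ[ℂ] C} (hρ : IsBddHom ρ) {Φ : A →ₐ[ℂ] B}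
    (hΦ : ∀ a, ‖Φ a‖ ≤ ‖a‖) : IsBddHom (ρ.comp Φ) := by
  obtain ⟨c, hc0, hc⟩ := hρ.exists_nonneg
  exact ⟨c, fun a => (hc (Φ a)).trans (mul_le_mul_of_nonneg_left (hΦ a) hc0)⟩

theorem homNorm_comp_le {ρ : B →ₐ[ℂ] C} (hρ : IsBddHom ρ) {Φ : A →ₐ[ℂ] B}
    (hΦ : ∀ a, ‖Φ a‖ ≤ ‖a‖) : homNorm (ρ.comp Φ) ≤ homNorm ρ :=
  csInf_le_csInf ⟨0, fun _ hd => hd.1⟩ hρ.exists_nonneg fun _ ⟨hc0, hc⟩ =>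
    ⟨hc0, fun a => (hc (Φ a)).trans (mul_le_mul_of_nonneg_left (hΦ a) hc0)⟩

end HomNorm

section Quotient

variable {A B : Type*} [CStarAlgebra A] [CStarAlgebra B]

open Filter Topology in
theorem PisierCondition.of_surjective (Φ : A →⋆ₐ[ℂ] B) (hΦ : Function.Surjective Φ)
    {f : ℝ → ℝ} (hf : MonotoneOn f (Set.Ici 0)) (hf_nonneg : ∀ r, 0 ≤ r → 0 ≤ f r)
    (hA : PisierCondition A f) : PisierCondition B f := by
  intro H _ _ _ ρ hρ n y
  have hΦ_le : ∀ a, ‖Φ a‖ ≤ ‖a‖ := NonUnitalStarAlgHom.norm_apply_le Φ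
  have hf_le : f (homNorm (ρ.comp Φ.toAlgHom)) ≤ f (homNorm ρ) :=
    hf (homNorm_nonneg _) (homNorm_nonneg _) (homNorm_comp_le hρ hΦ_le)
  have hlift : ∀ t > cstarMatNorm y, cstarMatNorm (ρ.mapMatrix y) ≤ f (homNorm ρ) * t := by
    intro t ht
    obtain ⟨x, rfl, hxt⟩ := Φ.exists_map_matrix_eq_cstarMatNorm_le hΦ ht
    calc cstarMatNorm (ρ.mapMatrix (x.map Φ))
        = cstarMatNorm ((ρ.comp Φ.toAlgHom).mapMatrix x) := rfl
      _ ≤ f (homNorm (ρ.comp Φ.toAlgHom)) * cstarMatNorm x := hA H _ (hρ.comp hΦ_le) n x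
      _ ≤ f (homNorm ρ) * t :=
        mul_le_mul hf_le hxt (Real.sqrt_nonneg _) (hf_nonneg _ (homNorm_nonneg ρ))
  exact ge_of_tendsto ((continuous_const_mul _).tendsto _ |>.mono_left nhdsWithin_le_nhds)
    (eventually_nhdsWithin_of_forall (s := Set.Ioi _) hlift)

theorem pisierDegree_le_of_surjective (Φ : A →⋆ₐ[ℂ] B) (hΦ : Function.Surjective Φ) :
    pisierDegree B ≤ pisierDegree A :=
  le_iInf₂ fun d ⟨hd, κ, hκ, hA⟩ => iInf₂_le d ⟨hd, κ, hκ, hA.of_surjective Φ hΦ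
    (fun _ hr _ _ hrs => mul_le_mul_of_nonneg_left (pow_le_pow_left₀ hr hrs d) hκ.le)
    (fun _ _ => by positivity)⟩

end Quotient

/-- If `Φ : A → B` is a surjective unital *-homomorphism between unital
C*-algebras, then `d̂(B) ≤ d̂(A)`. -/
theorem modified_degree_of_quotient {A B : Type*}
    [NormedRing A] [StarRing A] [CStarRing A] [NormedAlgebra ℂ A] [StarModule ℂ A]
    [CompleteSpace A]
    [NormedRing B] [StarRing B] [CStarRing B] [NormedAlgebra ℂ B] [StarModule ℂ B]
    [CompleteSpace B]
    (Φ : A →⋆ₐ[ℂ] B) (hΦ : Function.Surjective Φ) :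
    hatd B ≤ hatd A := by
  let _ : CStarAlgebra A := {}
  let _ : CStarAlgebra B := {}
  refine le_iInf₂ fun γ ⟨hγ, hdeg, hA⟩ => iInf₂_le γ ⟨hγ,
    (pisierDegree_le_of_surjective Φ hΦ).trans hdeg, hA.of_surjective Φ hΦ ?_ ?_⟩
  · exact fun _ hr _ _ hrs => mul_le_mul_of_nonneg_left (Real.rpow_le_rpow hr hrs hγ.le) hγ.le
  · exact fun r hr => mul_nonneg hγ.le (Real.rpow_nonneg hr γ)

end
end

section
/- Let n ≥ 2 and let 𝔾_n be the subgroup of the group of n×n unitary complex matrices generated by the diagonal unitary matrices together with the permutation matrices. If h ∈ 𝔾_n has infinite order, then h^{n!} is a diagonal unitary matrix diag(λ_1, …, λ_n) with h^{n!} ≠ I_n, h^{n!} has infinite order, and there exists an index j₀ ∈ {1, …, n} such that λ_{j₀} is not a root of unity. -/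
noncomputable section

open scoped ENNReal

/-- The subgroup `𝔾ₙ` of the `n × n` unitary group generated by the diagonal unitary
matrices together with the permutation matrices. -/
def Gn (n : ℕ) : Subgroup (Matrix.unitaryGroup (Fin n) ℂ) :=
  Subgroup.closure
    ({g | ∃ d : Fin n → ℂ, (g : Matrix (Fin n) (Fin n) ℂ) = Matrix.diagonal d} ∪
      {g | ∃ σ : Equiv.Perm (Fin n), (g : Matrix (Fin n) (Fin n) ℂ) = σ.permMatrix ℂ})

/-!
Every element of `𝔾ₙ` is a monomial matrix `D P_σ`, and `(D P_σ)^k = D' P_{σ^k}` for a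
diagonal `D'`; since `σ^{n!} = 1`, the power `h^{n!}` is diagonal. It has infinite order because
`h` does, whereas a diagonal unitary all of whose entries are roots of unity has finite order.
-/

open Matrix

section Monomial

variable {ι R : Type*} [Fintype ι] [DecidableEq ι]

theorem Matrix.permMatrix_mul_diagonal [NonAssocSemiring R] (σ : Equiv.Perm ι) (d : ι → R) :
    σ.permMatrix R * diagonal d = diagonal (d ∘ σ) * σ.permMatrix R := by
  rw [PEquiv.toMatrix_toPEquiv_mul, PEquiv.mul_toMatrix_toPEquiv]
  ext i j
  by_cases hij : σ i = j
  · subst hij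
    simp
  · simp [diagonal, hij, Equiv.eq_symm_apply]

theorem Matrix.diagonal_mul_permMatrix_mul_diagonal_mul_permMatrix [Semiring R]
    (d e : ι → R) (σ τ : Equiv.Perm ι) :
    diagonal d * σ.permMatrix R * (diagonal e * τ.permMatrix R) =
      diagonal (d * e ∘ σ) * (τ * σ).permMatrix R := by
  rw [mul_assoc, ← mul_assoc (σ.permMatrix R), permMatrix_mul_diagonal, mul_assoc,
    ← permMatrix_mul, ← mul_assoc, diagonal_mul_diagonal]
  rfl

theorem Matrix.diagonal_mul_permMatrix_pow [CommSemiring R] (d : ι → R) (σ : Equiv.Perm ι)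
    (k : ℕ) :
    (diagonal d * σ.permMatrix R) ^ k =
      diagonal (∏ i ∈ Finset.range k, d ∘ ⇑(σ ^ i)) * (σ ^ k).permMatrix R := by
  induction k with
  | zero => simp
  | succ k ih =>
    rw [pow_succ, ih, diagonal_mul_permMatrix_mul_diagonal_mul_permMatrix, ← pow_succ',
      Finset.prod_range_succ]

theorem Matrix.exists_diagonal_mul_permMatrix_pow_factorial_eq_diagonal [CommSemiring R]
    (d : ι → R) (σ : Equiv.Perm ι) : ∃ e : ι → R,
      (diagonal d * σ.permMatrix R) ^ (Fintype.card ι).factorial = diagonal e := by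
  have hσ : σ ^ (Fintype.card ι).factorial = 1 := by
    rw [← Fintype.card_perm]
    exact pow_card_eq_one
  exact ⟨_, by rw [diagonal_mul_permMatrix_pow, hσ, permMatrix_one, mul_one]⟩

variable (ι R) in
def Matrix.unitaryMonomialSubgroup [CommRing R] [StarRing R] :
    Subgroup (unitaryGroup ι R) where
  carrier := {u | ∃ (d : ι → R) (σ : Equiv.Perm ι),
    (u : Matrix ι ι R) = diagonal d * σ.permMatrix R}
  one_mem' := ⟨1, 1, by simp⟩
  mul_mem' := by
    rintro u v ⟨d, σ, hu⟩ ⟨e, τ, hv⟩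
    exact ⟨_, _, by rw [Submonoid.coe_mul, hu, hv,
      diagonal_mul_permMatrix_mul_diagonal_mul_permMatrix]⟩
  inv_mem' := by
    rintro u ⟨d, σ, hu⟩
    refine ⟨star d ∘ ⇑σ⁻¹, σ⁻¹, ?_⟩
    rw [Matrix.UnitaryGroup.inv_val, star_eq_conjTranspose, hu, conjTranspose_mul,
      conjTranspose_permMatrix, diagonal_conjTranspose, permMatrix_mul_diagonal]

theorem Matrix.isOfFinOrder_of_coe_eq_diagonal [CommRing R] [StarRing R] {u : unitaryGroup ι R}
    {d : ι → R} (hu : (u : Matrix ι ι R) = diagonal d) (hd : ∀ i, IsOfFinOrder (d i)) :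
    IsOfFinOrder u := by
  rw [← (unitaryGroup ι R).subtype_injective.isOfFinOrder_iff]
  simpa [hu] using (diagonalRingHom ι R).toMonoidHom.isOfFinOrder (IsOfFinOrder.pi hd)

theorem Matrix.norm_eq_one_of_diagonal_mem_unitaryGroup {𝕜 : Type*} [RCLike 𝕜] {d : ι → 𝕜}
    (hd : diagonal d ∈ unitaryGroup ι 𝕜) (i : ι) : ‖d i‖ = 1 := by
  rw [mem_unitaryGroup_iff', star_eq_conjTranspose, diagonal_conjTranspose,
    diagonal_mul_diagonal, ← diagonal_one] at hd
  have hi : star (d i) * d i = 1 := congrFun (diagonal_injective hd) i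
  rw [RCLike.star_def, RCLike.conj_mul] at hi
  exact (pow_eq_one_iff_of_nonneg (norm_nonneg _) two_ne_zero).mp (by exact_mod_cast hi)

end Monomial

theorem Gn_le_unitaryMonomialSubgroup (n : ℕ) : Gn n ≤ unitaryMonomialSubgroup (Fin n) ℂ := by
  refine Subgroup.closure_le _ |>.mpr ?_
  rintro u (⟨d, hu⟩ | ⟨σ, hu⟩)
  · exact ⟨d, 1, by simp [hu]⟩
  · exact ⟨1, σ, by simp [hu]⟩

theorem pow_factorial_diagonal_of_infinite_order_general (n : ℕ)
    (h : Matrix.unitaryGroup (Fin n) ℂ) (hG : h ∈ Gn n) (hord : ¬ IsOfFinOrder h) :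
    ∃ d : Fin n → ℂ,
      ((h ^ n.factorial : Matrix.unitaryGroup (Fin n) ℂ) : Matrix (Fin n) (Fin n) ℂ) =
          Matrix.diagonal d ∧
        (∀ i, ‖d i‖ = 1) ∧ h ^ n.factorial ≠ 1 ∧ ¬ IsOfFinOrder (h ^ n.factorial) ∧
        ∃ j₀ : Fin n, ∀ m : ℕ, 0 < m → d j₀ ^ m ≠ 1 := by
  obtain ⟨d, σ, hd⟩ := Gn_le_unitaryMonomialSubgroup n hG
  obtain ⟨e, he⟩ := exists_diagonal_mul_permMatrix_pow_factorial_eq_diagonal d σ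
  rw [Fintype.card_fin, ← hd, ← SubmonoidClass.coe_pow] at he
  have hinf : ¬ IsOfFinOrder (h ^ n.factorial) := fun hfin =>
    hord (hfin.of_pow n.factorial_ne_zero)
  refine ⟨e, he, norm_eq_one_of_diagonal_mem_unitaryGroup (he ▸ (h ^ n.factorial).2),
    fun h1 => hinf (h1 ▸ IsOfFinOrder.one), hinf, ?_⟩
  by_contra! hroot
  exact hinf <|
    isOfFinOrder_of_coe_eq_diagonal he fun j => isOfFinOrder_iff_pow_eq_one.mpr (hroot j)

/-- If `n ≥ 2` and `h ∈ 𝔾ₙ` has infinite order, then `h ^ n!` is a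
diagonal unitary matrix `diag (λ₁, …, λₙ)` with `h ^ n! ≠ 1`, `h ^ n!` of infinite order,
and some `λ_{j₀}` is not a root of unity. -/
theorem pow_factorial_diagonal_of_infinite_order (n : ℕ) (hn : 2 ≤ n)
    (h : Matrix.unitaryGroup (Fin n) ℂ) (hG : h ∈ Gn n) (hord : ¬ IsOfFinOrder h) :
    ∃ d : Fin n → ℂ,
      ((h ^ n.factorial : Matrix.unitaryGroup (Fin n) ℂ) : Matrix (Fin n) (Fin n) ℂ) =
          Matrix.diagonal d ∧
        (∀ i, ‖d i‖ = 1) ∧ h ^ n.factorial ≠ 1 ∧ ¬ IsOfFinOrder (h ^ n.factorial) ∧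
        ∃ j₀ : Fin n, ∀ m : ℕ, 0 < m → d j₀ ^ m ≠ 1 :=
  pow_factorial_diagonal_of_infinite_order_general n h hG hord

end
end
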